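/- Let m ≥ 1 and n_c ≥ 5 be integers. The winding-vector map induces a bijection between the set of configurations of the 1D honeycomb graph G(m, n_c) satisfying conditions (C1)–(C2), taken modulo global rotation (θ ∼ θ + c·(1,...,1) for c ∈ ℝ), and the set {k ∈ ℤ : |k| ≤ ⌈n_c/4⌉ − 1}^m. That is: for every vector (k_0, ..., k_{m−1}) of integers with |k_p| ≤ ⌈n_c/4⌉ − 1 for all p there exists a configuration satisfying (C1)–(C2) whose winding vector is (k_0, ..., k_{m−1}), and any two configurations satisfying (C1)–(C2) with the same winding vector differ by a global additive constant. -/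

import Mathlib

/-! With all steps on the `p`-th cycle equal to `δ = 2π k_p / n_c`, the bound `|k_p| < n_c / 4`
puts `δ` in `[-π, π)`, so every path edge contributes `δ` to the winding sum, and the chord,
whose raw difference is `-(n_c - 1) δ = δ - 2π k_p`, contributes `δ` as well: the winding number
is `n_c δ / 2π = k_p`. Hence the winding vector recovers `k`, which in turn fixes every
difference `θ_{i+1} - θ_i`, so `θ` is determined up to a constant; conversely, summing the
prescribed steps realizes any admissible `k`. -/

/-- The counterclockwise difference: the unique element of `[-π, π)` congruent to `x`
modulo `2π`. -/
noncomputable def dcc (x : ℝ) : ℝ :=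
  x - 2 * Real.pi * ((⌊(x + Real.pi) / (2 * Real.pi)⌋ : ℤ) : ℝ)

/-- Conditions (C1)–(C2). -/
def satisfiesC (m nc : ℕ) (θ : ℕ → ℝ) (k : ℕ → ℤ) : Prop :=
  (∀ p, p < m → |k p| ≤ ⌈(nc : ℚ) / 4⌉ - 1) ∧
  (∀ p, p < m → ∀ i, p * (nc - 1) + 1 ≤ i → i ≤ (p + 1) * (nc - 1) →
    θ (i + 1) - θ i = 2 * Real.pi * (k p : ℝ) / (nc : ℝ))

/-- The winding number of `θ` along the `p`-th basis cycle of the 1D honeycomb graph. -/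
noncomputable def windingP (nc : ℕ) (θ : ℕ → ℝ) (p : ℕ) : ℝ :=
  (1 / (2 * Real.pi)) *
    ((∑ j ∈ Finset.range (nc - 1),
        dcc (θ (p * (nc - 1) + 1 + j + 1) - θ (p * (nc - 1) + 1 + j))) +
      dcc (θ (p * (nc - 1) + 1) - θ ((p + 1) * (nc - 1) + 1)))

open Real Finset

theorem dcc_eq_toIcoMod (x : ℝ) : dcc x = toIcoMod two_pi_pos (-π) x := by
  rw [toIcoMod, toIcoDiv_eq_floor, dcc, zsmul_eq_mul, sub_neg_eq_add]
  ring

theorem dcc_eq_self {x : ℝ} (hx : x ∈ Set.Ico (-π) π) : dcc x = x := by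
  rwa [dcc_eq_toIcoMod, toIcoMod_eq_self, neg_add_eq_sub, two_mul, add_sub_cancel_right]

theorem dcc_sub_intCast_mul (x : ℝ) (n : ℤ) : dcc (x - n * (2 * π)) = dcc x := by
  simp only [dcc_eq_toIcoMod, toIcoMod_sub_intCast_mul]

theorem four_mul_abs_lt_of_abs_le_ceil_sub_one {k : ℤ} {n : ℕ} (h : |k| ≤ ⌈(n : ℚ) / 4⌉ - 1) :
    4 * |k| < n := by
  rw [Int.le_sub_one_iff, Int.lt_ceil, lt_div_iff₀ (by norm_num)] at h
  exact_mod_cast (by push_cast at h ⊢; linarith : ((4 * |k| : ℤ) : ℚ) < n)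

theorem eq_add_mul_of_sub_eq {f : ℕ → ℝ} {a n : ℕ} {δ : ℝ}
    (h : ∀ j < n, f (a + j + 1) - f (a + j) = δ) : f (a + n) = f a + n * δ := by
  induction n with
  | zero => simp
  | succ n ih =>
    rw [← add_assoc, Nat.cast_succ]
    linarith [ih fun j hj => h j (by omega), h n (by omega)]

theorem windingP_eq_of_sub_eq {nc p : ℕ} {θ : ℕ → ℝ} {k : ℤ} (hk : 2 * |k| < nc)
    (hstep : ∀ j < nc - 1,
      θ (p * (nc - 1) + 1 + j + 1) - θ (p * (nc - 1) + 1 + j) = 2 * π * k / nc) :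
    windingP nc θ p = k := by
  obtain ⟨hk_lo, hk_hi⟩ : -(nc : ℝ) < 2 * k ∧ 2 * (k : ℝ) < nc := by
    have : |2 * k| < nc := by rwa [abs_mul, abs_two]
    exact_mod_cast abs_lt.1 this
  have hnc : 1 ≤ nc := by have := abs_nonneg k; omega
  have hnc_pos : (0 : ℝ) < nc := by exact_mod_cast hnc
  set δ := 2 * π * k / nc with hδ
  have hδ_mem : δ ∈ Set.Ico (-π) π := by
    constructor
    · rw [hδ, le_div_iff₀ hnc_pos]; nlinarith [pi_pos]
    · rw [hδ, div_lt_iff₀ hnc_pos]; nlinarith [pi_pos]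
  have hchord : θ (p * (nc - 1) + 1) - θ ((p + 1) * (nc - 1) + 1) = δ - k * (2 * π) := by
    rw [show (p + 1) * (nc - 1) + 1 = p * (nc - 1) + 1 + (nc - 1) by ring,
      eq_add_mul_of_sub_eq hstep, Nat.cast_sub hnc, hδ]
    field_simp
    ring
  rw [windingP, sum_congr rfl fun j hj => by rw [hstep j (mem_range.1 hj)], hchord,
    dcc_sub_intCast_mul, dcc_eq_self hδ_mem, sum_const, card_range, nsmul_eq_mul,
    Nat.cast_sub hnc, hδ]
  field_simp
  ring

theorem sub_one_div_eq_of_mem_block {b p i : ℕ} (h₁ : p * b + 1 ≤ i) (h₂ : i ≤ (p + 1) * b) :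
    (i - 1) / b = p :=
  Nat.div_eq_of_lt_le (by omega) (by rw [add_one_mul] at h₂ ⊢; omega)

theorem exists_mem_block {b m i : ℕ} (h₁ : 1 ≤ i) (h₂ : i ≤ m * b) :
    ∃ p < m, p * b + 1 ≤ i ∧ i ≤ (p + 1) * b := by
  have hb : 0 < b := Nat.pos_of_ne_zero fun hb => by simp [hb] at h₂; omega
  refine ⟨(i - 1) / b, (Nat.div_lt_iff_lt_mul hb).2 (by omega), ?_, ?_⟩
  · have := Nat.div_mul_le_self (i - 1) b
    omega
  · have := Nat.lt_div_mul_add (a := i - 1) hb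
    rw [add_one_mul]
    omega

theorem windingP_eq_of_satisfiesC {m nc p : ℕ} {θ : ℕ → ℝ} {k : ℕ → ℤ}
    (hC : satisfiesC m nc θ k) (hp : p < m) : windingP nc θ p = k p := by
  have := four_mul_abs_lt_of_abs_le_ceil_sub_one (hC.1 p hp)
  refine windingP_eq_of_sub_eq (by linarith [abs_nonneg (k p)]) fun j hj => ?_
  exact hC.2 p hp _ (by omega) (by rw [add_one_mul]; omega)

/-- The configuration with `θ₁ = 0` whose steps on the `p`-th cycle are all `2π k_p / n_c`. -/
noncomputable def stepConfig (nc : ℕ) (k : ℕ → ℤ) (i : ℕ) : ℝ :=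
  ∑ j ∈ range (i - 1), 2 * π * k (j / (nc - 1)) / nc

theorem satisfiesC_stepConfig {m nc : ℕ} {k : ℕ → ℤ}
    (hk : ∀ p < m, |k p| ≤ ⌈(nc : ℚ) / 4⌉ - 1) : satisfiesC m nc (stepConfig nc k) k := by
  refine ⟨hk, fun p _ i h₁ h₂ => ?_⟩
  obtain ⟨i, rfl⟩ : ∃ i', i = i' + 1 := ⟨i - 1, by omega⟩
  rw [stepConfig, stepConfig, Nat.add_sub_cancel, Nat.add_sub_cancel, sum_range_succ,
    add_sub_cancel_left, ← Nat.add_sub_cancel i 1, sub_one_div_eq_of_mem_block h₁ h₂]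

theorem eq_add_const_of_sub_eq {θ φ : ℕ → ℝ} {N : ℕ}
    (h : ∀ i, 1 ≤ i → i ≤ N → θ (i + 1) - θ i = φ (i + 1) - φ i) :
    ∀ i, 1 ≤ i → i ≤ N + 1 → θ i = φ i + (θ 1 - φ 1) := by
  intro i h₁
  induction i, h₁ using Nat.le_induction with
  | base => intro; ring
  | succ i hi ih =>
    intro hiN
    linarith [ih (by omega), h i hi (by omega)]

theorem winding_vector_bijection_general (m nc : ℕ) :
    (∀ k : ℕ → ℤ, (∀ p, p < m → |k p| ≤ ⌈(nc : ℚ) / 4⌉ - 1) →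
      ∃ θ : ℕ → ℝ, satisfiesC m nc θ k ∧ ∀ p, p < m → windingP nc θ p = (k p : ℝ)) ∧
    (∀ θ φ : ℕ → ℝ, ∀ k k' : ℕ → ℤ,
      satisfiesC m nc θ k → satisfiesC m nc φ k' →
      (∀ p, p < m → windingP nc θ p = windingP nc φ p) →
      ∃ c : ℝ, ∀ i, 1 ≤ i → i ≤ m * (nc - 1) + 1 → θ i = φ i + c) := by
  refine ⟨fun k hk => ?_, fun θ φ k k' hθ hφ hw => ?_⟩
  · have hC := satisfiesC_stepConfig hk
    exact ⟨stepConfig nc k, hC, fun p hp => windingP_eq_of_satisfiesC hC hp⟩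
  · have hkk : ∀ p < m, k p = k' p := fun p hp => by
      have := hw p hp
      rwa [windingP_eq_of_satisfiesC hθ hp, windingP_eq_of_satisfiesC hφ hp, Int.cast_inj] at this
    refine ⟨θ 1 - φ 1, eq_add_const_of_sub_eq fun i h₁ h₂ => ?_⟩
    obtain ⟨p, hp, hi₁, hi₂⟩ := exists_mem_block h₁ h₂
    rw [hθ.2 p hp i hi₁ hi₂, hφ.2 p hp i hi₁ hi₂, hkk p hp]

/-- the winding-vector map is a bijection between configurations satisfying
(C1)–(C2) modulo global rotation and the set `{k ∈ ℤ : |k| ≤ ⌈n_c/4⌉ - 1}^m`: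
every admissible integer vector is realized as the winding vector of some configuration
satisfying (C1)–(C2), and any two configurations satisfying (C1)–(C2) with the same
winding vector differ by a global additive constant (on the vertex set). -/
theorem winding_vector_bijection (m nc : ℕ) (hm : 1 ≤ m) (hnc : 5 ≤ nc) :
    (∀ k : ℕ → ℤ, (∀ p, p < m → |k p| ≤ ⌈(nc : ℚ) / 4⌉ - 1) →
      ∃ θ : ℕ → ℝ, satisfiesC m nc θ k ∧ ∀ p, p < m → windingP nc θ p = (k p : ℝ)) ∧
    (∀ θ φ : ℕ → ℝ, ∀ k k' : ℕ → ℤ,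
      satisfiesC m nc θ k → satisfiesC m nc φ k' →
      (∀ p, p < m → windingP nc θ p = windingP nc φ p) →
      ∃ c : ℝ, ∀ i, 1 ≤ i → i ≤ m * (nc - 1) + 1 → θ i = φ i + c) :=
  winding_vector_bijection_general m nc
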